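/- For n ≥ 4, every triangulation of a convex n-gon contains at least two ears, i.e., at least two triangles each of which has two of its sides among the polygon sides (and only one diagonal side). -/

import Mathlib

/-!
Every diagonal `s(p, q)` of a triangulation `T` cuts off an ear `{c, c + 1, c + 2}` lying in the
closed arc from `p` to `q`, by induction on the length of that arc: if `s(p + 1, q) ∈ T`, recurse
on it; otherwise, by maximality, some member of `T` crosses `s(p + 1, q)`, and since it may not
cross `s(p, q)` it issues from `p`, which gives a shorter arc. For `n ≥ 4` the triangulation has a
diagonal (`s(0, 2)` is in `T` or crossed by a member of `T`); its two orientations give ears in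
the two arcs it bounds, which share only the endpoints of the diagonal, so the ears differ.
-/

namespace Polygon

/-- `x` lies strictly inside the arc from `a` to `b`, travelling in the
increasing cyclic direction around the convex `n`-gon `0, 1, …, n-1`. -/
def StrictBtw {n : ℕ} (a x b : Fin n) : Prop :=
  0 < (x - a).val ∧ (x - a).val < (b - a).val

/-- `e` is a side of the convex `n`-gon, i.e. an edge `{i, i+1 (mod n)}` (the successor taken cyclically). -/
def IsSide (n : ℕ) (e : Sym2 (Fin n)) : Prop :=
  ∃ i j : Fin n, e = s(i, j) ∧ (j - i).val = 1

/-- `e` is a diagonal of the convex `n`-gon: it joins two distinct,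
non-consecutive vertices. -/
def IsDiagonal (n : ℕ) (e : Sym2 (Fin n)) : Prop :=
  ¬ e.IsDiag ∧ ¬ IsSide n e

/-- Two chords of the polygon cross: their endpoints alternate strictly
around the cycle. -/
def Crosses {n : ℕ} (e f : Sym2 (Fin n)) : Prop :=
  ∃ a b c d : Fin n, e = s(a, b) ∧ f = s(c, d) ∧ StrictBtw a c b ∧ StrictBtw b d a

/-- A triangulation of the convex `n`-gon: a maximal set of pairwise
noncrossing diagonals. -/
def IsTriangulation (n : ℕ) (T : Finset (Sym2 (Fin n))) : Prop :=
  (∀ e ∈ T, IsDiagonal n e) ∧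
  (∀ e ∈ T, ∀ f ∈ T, ¬ Crosses e f) ∧
  (∀ e : Sym2 (Fin n), IsDiagonal n e → e ∉ T → ∃ f ∈ T, Crosses e f)

/-- A triangle of the triangulation `T`: a set of three vertices, each pair of
which is joined by a polygon side or a diagonal of `T` (for a convex polygon
these are exactly the triangles of the induced partition of the polygon). -/
def IsTriangleOf (n : ℕ) (T : Finset (Sym2 (Fin n))) (t : Finset (Fin n)) : Prop :=
  t.card = 3 ∧ ∀ x ∈ t, ∀ y ∈ t, x ≠ y → (IsSide n s(x, y) ∨ s(x, y) ∈ T)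

/-- The number of sides of the triangle `t` that are diagonals of the
triangulation `T`. -/
noncomputable def diagCount {n : ℕ} (T : Finset (Sym2 (Fin n))) (t : Finset (Fin n)) : ℕ :=
  {e : Sym2 (Fin n) | e ∈ t.sym2 ∧ ¬ e.IsDiag ∧ e ∈ T}.ncard

/-- The number of sides of the triangle `t` that are polygon sides. -/
noncomputable def sideCount (n : ℕ) (t : Finset (Fin n)) : ℕ :=
  {e : Sym2 (Fin n) | e ∈ t.sym2 ∧ IsSide n e}.ncard

end Polygon

namespace Fin

variable {n : ℕ} [NeZero n]

theorem val_sub_add_val_sub (x y z : Fin n) :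
    (x - y).val + (y - z).val = (x - z).val ∨ (x - y).val + (y - z).val = (x - z).val + n := by
  rw [← sub_add_sub_cancel x y z, Fin.val_add_eq_ite]
  split_ifs <;> omega

theorem val_sub_eq_zero_iff {a b : Fin n} : (a - b).val = 0 ↔ a = b := by
  rw [Fin.val_eq_zero_iff, sub_eq_zero]

theorem val_sub_add_val_sub_swap {a b : Fin n} (h : a ≠ b) : (a - b).val + (b - a).val = n := by
  have hab : (a - b).val ≠ 0 := fun h' => h (val_sub_eq_zero_iff.1 h')
  have hba : (b - a).val ≠ 0 := fun h' => h (val_sub_eq_zero_iff.1 h').symm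
  have := val_sub_add_val_sub a b a
  rw [sub_self, Fin.val_zero] at this
  omega

theorem val_sub_add_one_add_one {a x : Fin n} (h : x ≠ a) :
    (x - (a + 1)).val + 1 = (x - a).val := by
  have h2 : 2 ≤ n := Fin.nontrivial_iff_two_le.1 ⟨⟨x, a, h⟩⟩
  have h1 : (a + 1 - a).val = 1 := by
    rw [add_sub_cancel_left, Fin.val_one', Nat.mod_eq_of_lt h2]
  have hx : (x - a).val ≠ 0 := fun h' => h (val_sub_eq_zero_iff.1 h')
  have := val_sub_add_val_sub x (a + 1) a
  have := (x - (a + 1)).isLt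
  omega

theorem val_sub_add_one_self_add_one (a : Fin n) : (a - (a + 1)).val + 1 = n := by
  rcases Nat.lt_or_ge 1 n with hn | hn
  · have h1 : ((1 : Fin n) : ℕ) = 1 := by rw [Fin.coe_ofNat_eq_mod, Nat.mod_eq_of_lt hn]
    rw [sub_add_cancel_left, Fin.val_neg, if_neg (fun h => by simp [Fin.ext_iff] at h; omega), h1]
    omega
  · have := (a - (a + 1)).isLt
    have := NeZero.pos n
    omega

end Fin

namespace Polygon

variable {n : ℕ}

theorem isSide_mk_iff {a b : Fin n} : IsSide n s(a, b) ↔ (b - a).val = 1 ∨ (a - b).val = 1 := by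
  constructor
  · rintro ⟨i, j, he, hij⟩
    rcases Sym2.eq_iff.1 he with ⟨rfl, rfl⟩ | ⟨rfl, rfl⟩
    · exact Or.inl hij
    · exact Or.inr hij
  · rintro (h | h)
    · exact ⟨a, b, rfl, h⟩
    · exact ⟨b, a, Sym2.eq_swap, h⟩

theorem isDiagonal_mk_iff [NeZero n] {a b : Fin n} :
    IsDiagonal n s(a, b) ↔ 2 ≤ (b - a).val ∧ 2 ≤ (a - b).val := by
  rw [IsDiagonal, Sym2.mk_isDiag_iff, isSide_mk_iff]
  by_cases hab : a = b
  · subst hab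
    simp
  · have := Fin.val_sub_eq_zero_iff.not.2 hab
    have := Fin.val_sub_eq_zero_iff.not.2 (Ne.symm hab)
    omega

theorem crosses_mk_iff {a b : Fin n} {f : Sym2 (Fin n)} :
    Crosses s(a, b) f ↔ ∃ c d, f = s(c, d) ∧ StrictBtw a c b ∧ StrictBtw b d a := by
  constructor
  · rintro ⟨a', b', c, d, he, rfl, hc, hd⟩
    rcases Sym2.eq_iff.1 he with ⟨rfl, rfl⟩ | ⟨rfl, rfl⟩
    · exact ⟨c, d, rfl, hc, hd⟩
    · exact ⟨d, c, Sym2.eq_swap, hd, hc⟩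
  · rintro ⟨c, d, rfl, hc, hd⟩
    exact ⟨a, b, c, d, rfl, rfl, hc, hd⟩

def arc (a b : Fin n) : Finset (Fin n) :=
  {x | (x - a).val ≤ (b - a).val}

@[simp]
theorem mem_arc {a b x : Fin n} : x ∈ arc a b ↔ (x - a).val ≤ (b - a).val := by
  simp [arc]

theorem arc_subset_arc_of_mem {a b c : Fin n} (h : b ∈ arc a c) : arc a b ⊆ arc a c :=
  fun _ hx => mem_arc.2 ((mem_arc.1 hx).trans (mem_arc.1 h))

variable [NeZero n]

theorem arc_add_one_subset {a b : Fin n} (h : a ≠ b) : arc (a + 1) b ⊆ arc a b := by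
  intro x hx
  rw [mem_arc] at hx ⊢
  by_cases hxa : x = a
  · simp [hxa]
  · have := Fin.val_sub_add_one_add_one hxa
    have := Fin.val_sub_add_one_add_one (Ne.symm h)
    omega

theorem arc_inter_arc_subset (a b : Fin n) : arc a b ∩ arc b a ⊆ {a, b} := by
  intro x hx
  rw [Finset.mem_inter, mem_arc, mem_arc] at hx
  rw [Finset.mem_insert, Finset.mem_singleton, ← Fin.val_sub_eq_zero_iff,
    ← Fin.val_sub_eq_zero_iff]
  by_cases hab : a = b
  · subst hab
    rw [sub_self, Fin.val_zero] at hx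
    omega
  · have := Fin.val_sub_add_val_sub_swap hab
    have := Fin.val_sub_add_val_sub x a b
    omega

def consecutiveTriangle (c : Fin n) : Finset (Fin n) :=
  {c, c + 1, c + 2}

theorem consecutiveTriangle_subset_arc {p q : Fin n} (h : 2 ≤ (q - p).val) :
    consecutiveTriangle p ⊆ arc p q := by
  intro x hx
  simp only [consecutiveTriangle, Finset.mem_insert, Finset.mem_singleton] at hx
  rw [mem_arc]
  rcases hx with rfl | rfl | rfl
  · simp
  · rw [add_sub_cancel_left, Fin.coe_ofNat_eq_mod]
    exact (Nat.mod_le 1 n).trans (by omega)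
  · rw [add_sub_cancel_left, Fin.coe_ofNat_eq_mod]
    exact (Nat.mod_le 2 n).trans h

theorem consecutiveTriangle_pairwise_ne (hn : 3 ≤ n) (c : Fin n) :
    c ≠ c + 1 ∧ c ≠ c + 2 ∧ c + 1 ≠ c + 2 := by
  have h1 : ((1 : Fin n) : ℕ) = 1 := by rw [Fin.coe_ofNat_eq_mod, Nat.mod_eq_of_lt (by omega)]
  have h2 : ((2 : Fin n) : ℕ) = 2 := by rw [Fin.coe_ofNat_eq_mod, Nat.mod_eq_of_lt (by omega)]
  have hne : ∀ i j : Fin n, i.val ≠ j.val → c + i ≠ c + j :=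
    fun i j h e => h (congrArg Fin.val (add_left_cancel e))
  refine ⟨?_, ?_, hne 1 2 (by omega)⟩
  · simpa using hne 0 1 (by rw [Fin.val_zero, h1]; omega)
  · simpa using hne 0 2 (by rw [Fin.val_zero, h2]; omega)

theorem card_consecutiveTriangle (hn : 3 ≤ n) (c : Fin n) : (consecutiveTriangle c).card = 3 :=
  have ⟨h01, h02, h12⟩ := consecutiveTriangle_pairwise_ne hn c
  Finset.card_eq_three.2 ⟨c, c + 1, c + 2, h01, h02, h12, rfl⟩

theorem isSide_mk_add_one (hn : 2 ≤ n) (c : Fin n) : IsSide n s(c, c + 1) :=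
  ⟨c, c + 1, rfl, by rw [add_sub_cancel_left, Fin.coe_ofNat_eq_mod, Nat.mod_eq_of_lt hn]⟩

open Fin.CommRing in
theorem isSide_mk_add_one_add_two (hn : 2 ≤ n) (c : Fin n) : IsSide n s(c + 1, c + 2) := by
  rw [show c + 2 = c + 1 + 1 by ring]
  exact isSide_mk_add_one hn (c + 1)

theorem isTriangleOf_consecutiveTriangle (hn : 3 ≤ n) {T : Finset (Sym2 (Fin n))} {c : Fin n}
    (hc : s(c, c + 2) ∈ T) : IsTriangleOf n T (consecutiveTriangle c) := by
  have h01 := isSide_mk_add_one (by omega) c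
  have h12 := isSide_mk_add_one_add_two (by omega) c
  refine ⟨card_consecutiveTriangle hn c, ?_⟩
  simp only [consecutiveTriangle, Finset.mem_insert, Finset.mem_singleton]
  rintro x (rfl | rfl | rfl) y (rfl | rfl | rfl) hxy <;> simp_all [Sym2.eq_swap]

theorem sideCount_consecutiveTriangle (hn : 3 ≤ n) {c : Fin n} (hc : ¬ IsSide n s(c, c + 2)) :
    sideCount n (consecutiveTriangle c) = 2 := by
  have h01 := isSide_mk_add_one (by omega) c
  have h12 := isSide_mk_add_one_add_two (by omega) c
  obtain ⟨hne01, hne02, hne12⟩ := consecutiveTriangle_pairwise_ne hn c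
  have hsides : {e | e ∈ (consecutiveTriangle c).sym2 ∧ IsSide n e} =
      {s(c, c + 1), s(c + 1, c + 2)} := by
    ext e
    induction e using Sym2.ind with | _ x y => ?_
    simp only [consecutiveTriangle, Set.mem_ofPred_eq, Finset.mk_mem_sym2_iff, Finset.mem_insert,
      Finset.mem_singleton, Set.mem_insert_iff, Set.mem_singleton_iff]
    constructor
    · rintro ⟨⟨rfl | rfl | rfl, rfl | rfl | rfl⟩, hs⟩ <;> simp_all [Sym2.eq_swap, isSide_mk_iff]
    · rintro (h | h) <;> rcases Sym2.eq_iff.1 h with ⟨rfl, rfl⟩ | ⟨rfl, rfl⟩ <;>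
        simp [h01, h12, Sym2.eq_swap]
  rw [sideCount, hsides, Set.ncard_pair]
  simp [hne01, hne02]

namespace IsTriangulation

variable {T : Finset (Sym2 (Fin n))}

theorem exists_mk_mem (hT : IsTriangulation n T) (hn : 4 ≤ n) : ∃ a b, s(a, b) ∈ T := by
  by_cases h : s((0 : Fin n), 2) ∈ T
  · exact ⟨0, 2, h⟩
  have h2 : ((2 : Fin n) : ℕ) = 2 := by rw [Fin.coe_ofNat_eq_mod, Nat.mod_eq_of_lt (by omega)]
  have hdiag : IsDiagonal n s((0 : Fin n), 2) := by
    have := Fin.val_sub_add_val_sub_swap (a := (0 : Fin n)) (b := 2)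
      (by rw [Ne, Fin.ext_iff, Fin.val_zero, h2]; omega)
    rw [sub_zero, h2] at this
    rw [isDiagonal_mk_iff, sub_zero, h2]
    omega
  obtain ⟨f, hf, hcross⟩ := hT.2.2 _ hdiag h
  obtain ⟨c, d, rfl, -⟩ := crosses_mk_iff.1 hcross
  exact ⟨c, d, hf⟩

theorem exists_strictBtw_mem_of_add_one_notMem (hT : IsTriangulation n T) {p q : Fin n}
    (hpq : s(p, q) ∈ T) (h3 : 3 ≤ (q - p).val) (hnot : s(p + 1, q) ∉ T) :
    ∃ u, StrictBtw p u q ∧ s(p, u) ∈ T := by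
  have hqp := (isDiagonal_mk_iff.1 (hT.1 _ hpq)).2
  have hne : p ≠ q := by rintro rfl; simp at h3
  have hsum := Fin.val_sub_add_val_sub_swap hne
  have hq := Fin.val_sub_add_one_add_one hne.symm
  have hne' : p + 1 ≠ q := by rintro rfl; rw [sub_self, Fin.val_zero] at hq; omega
  have hsum' := Fin.val_sub_add_val_sub_swap hne'
  have hdiag : IsDiagonal n s(p + 1, q) := isDiagonal_mk_iff.2 ⟨by omega, by omega⟩
  obtain ⟨f, hf, hcross⟩ := hT.2.2 _ hdiag hnot
  obtain ⟨u, v, rfl, ⟨hu0, hu⟩, ⟨hv0, hv⟩⟩ := crosses_mk_iff.1 hcross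
  have hup : u ≠ p := by
    rintro rfl
    have := Fin.val_sub_add_one_self_add_one u
    omega
  have hu' := Fin.val_sub_add_one_add_one hup
  have hu_btw : StrictBtw p u q := ⟨by omega, by omega⟩
  -- `s(u, v)` may not cross `s(p, q)`, so `v`, which lies strictly between `q` and `p + 1`, is `p`.
  obtain rfl : v = p := by
    by_contra hvp
    have hvq : (v - q).val ≠ (p - q).val := fun h => hvp (sub_left_inj.1 (Fin.ext h))
    exact hT.2.1 _ hpq _ hf ⟨p, q, u, v, rfl, rfl, hu_btw, hv0, by omega⟩
  exact ⟨u, hu_btw, by rwa [Sym2.eq_swap]⟩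

theorem exists_ear_subset_arc (hT : IsTriangulation n T) {p q : Fin n} (hpq : s(p, q) ∈ T) :
    ∃ c, s(c, c + 2) ∈ T ∧ consecutiveTriangle c ⊆ arc p q := by
  induction hg : (q - p).val using Nat.strong_induction_on generalizing p q with
  | _ g ih =>
  obtain ⟨h2, -⟩ := isDiagonal_mk_iff.1 (hT.1 _ hpq)
  by_cases hg2 : g = 2
  · have hq : q = p + 2 := by
      refine sub_eq_iff_eq_add'.1 (Fin.ext ?_)
      rw [Fin.coe_ofNat_eq_mod, Nat.mod_eq_of_lt (by omega)]
      omega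
    exact ⟨p, hq ▸ hpq, consecutiveTriangle_subset_arc h2⟩
  have hne : p ≠ q := by rintro rfl; simp at h2
  by_cases hmem : s(p + 1, q) ∈ T
  · have hgap := Fin.val_sub_add_one_add_one hne.symm
    obtain ⟨c, hc, hsub⟩ := ih _ (by omega) hmem rfl
    exact ⟨c, hc, hsub.trans (arc_add_one_subset hne)⟩
  · obtain ⟨u, ⟨-, hu⟩, hpu⟩ := hT.exists_strictBtw_mem_of_add_one_notMem hpq (by omega) hmem
    obtain ⟨c, hc, hsub⟩ := ih _ (hg ▸ hu) hpu rfl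
    exact ⟨c, hc, hsub.trans (arc_subset_arc_of_mem (mem_arc.2 hu.le))⟩

end IsTriangulation

end Polygon

open Polygon in
/-- Every triangulation of a convex `n`-gon (`n ≥ 4`) has at least two ears:
triangles exactly two of whose sides are polygon sides (and only one diagonal side). -/
theorem triangulation_has_two_ears (n : ℕ) (hn : 4 ≤ n)
    (T : Finset (Sym2 (Fin n))) (hT : IsTriangulation n T) :
    2 ≤ {t : Finset (Fin n) | IsTriangleOf n T t ∧ sideCount n t = 2}.ncard := by
  have : NeZero n := ⟨by omega⟩
  have ear : ∀ c : Fin n, s(c, c + 2) ∈ T →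
      IsTriangleOf n T (consecutiveTriangle c) ∧ sideCount n (consecutiveTriangle c) = 2 :=
    fun c hc => ⟨isTriangleOf_consecutiveTriangle (by omega) hc,
      sideCount_consecutiveTriangle (by omega) (hT.1 _ hc).2⟩
  obtain ⟨a, b, hab⟩ := hT.exists_mk_mem hn
  obtain ⟨c, hc, hc_sub⟩ := hT.exists_ear_subset_arc hab
  obtain ⟨d, hd, hd_sub⟩ := hT.exists_ear_subset_arc (Sym2.eq_swap ▸ hab)
  have hcd : consecutiveTriangle c ≠ consecutiveTriangle d := by
    intro h
    have hsub : consecutiveTriangle c ⊆ {a, b} :=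
      (Finset.subset_inter hc_sub (h ▸ hd_sub)).trans (arc_inter_arc_subset a b)
    have := (Finset.card_le_card hsub).trans Finset.card_le_two
    rw [card_consecutiveTriangle (by omega)] at this
    omega
  exact (Set.one_lt_ncard_iff (Set.toFinite _)).2 ⟨_, _, ear c hc, ear d hd, hcd⟩
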